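/- Let f be a bounded holomorphic function on the open unit disk 𝔻. If the radial limit lim_{r→1⁻} f(r e^{iθ}) exists and equals 0 for all e^{iθ} in a measurable subset E of the unit circle with positive Lebesgue measure, then f is identically zero. -/

import Mathlib

/-!
If `f ≢ 0`, Jensen's formula bounds `log ‖f‖` from below on average over the circles `|z| = r`,
uniformly for `r` close to `1`. On the other hand `log (max ‖f‖ ε)` dominates `log ‖f‖` off the
discrete zero set, is at most `log C` everywhere and tends to `log ε` on the rays through `E`, so
by dominated convergence the limit superior of its circle averages is at most
`(δ log ε + (2π - δ) log C) / 2π`, where `δ = |E| > 0`. Letting `ε → 0` contradicts the lower bound.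
-/

open MeasureTheory Metric Filter Complex Topology
open Real (circleAverage circleAverage_def two_pi_pos)

theorem le_of_eventually_le_setIntegral_of_tendsto {ι α : Type*} [MeasurableSpace α]
    {μ : Measure α} {l : Filter ι} [l.IsCountablyGenerated] [l.NeBot] {s E : Set α}
    {F : ι → α → ℝ} {a m M b : ℝ} (hs : MeasurableSet s) (hμs : μ s ≠ ⊤) (hE : MeasurableSet E)
    (hEs : E ⊆ s) (hF_meas : ∀ᶠ i in l, AEStronglyMeasurable (F i) (μ.restrict s))
    (hF_bound : ∀ᶠ i in l, ∀ x ∈ s, F i x ∈ Set.Icc m M)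
    (hF_lim : ∀ x ∈ E, Tendsto (F · x) l (𝓝 a))
    (hb : ∀ᶠ i in l, b ≤ ∫ x in s, F i x ∂μ) :
    b ≤ a * μ.real E + M * μ.real (s \ E) := by
  have : IsFiniteMeasure (μ.restrict s) := isFiniteMeasure_restrict.mpr hμs
  have hF_norm : ∀ᶠ i in l, ∀ x ∈ s, ‖F i x‖ ≤ max |m| |M| := by
    filter_upwards [hF_bound] with i hi x hx
    exact abs_le_max_abs_abs (hi x hx).1 (hi x hx).2
  have hF_int : ∀ᶠ i in l, IntegrableOn (F i) s μ := by
    filter_upwards [hF_meas, hF_norm] with i hi hi'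
    exact Integrable.of_bound hi _ ((ae_restrict_iff' hs).mpr (.of_forall hi'))
  have hE_lim : Tendsto (fun i ↦ ∫ x in E, F i x ∂μ) l (𝓝 (a * μ.real E)) := by
    rw [mul_comm, ← smul_eq_mul, ← setIntegral_const]
    refine tendsto_integral_filter_of_dominated_convergence (fun _ ↦ max |m| |M|)
      (hF_meas.mono fun i hi ↦ hi.mono_measure (Measure.restrict_mono hEs le_rfl)) ?_
      (integrableOn_const (ne_top_of_le_ne_top hμs (measure_mono hEs)))
      ((ae_restrict_iff' hE).mpr (.of_forall hF_lim))
    filter_upwards [hF_norm] with i hi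
    exact (ae_restrict_iff' hE).mpr (.of_forall fun x hx ↦ hi x (hEs hx))
  have hsplit : ∀ᶠ i in l, b ≤ ∫ x in E, F i x ∂μ + M * μ.real (s \ E) := by
    filter_upwards [hb, hF_int, hF_bound] with i hbi hint hbound
    calc b ≤ ∫ x in s, F i x ∂μ := hbi
      _ = ∫ x in E, F i x ∂μ + ∫ x in s \ E, F i x ∂μ := by
        rw [setIntegral_sdiff hE hint hEs, add_sub_cancel]
      _ ≤ ∫ x in E, F i x ∂μ + ∫ _ in s \ E, M ∂μ := by
        refine add_le_add_right (setIntegral_mono_on (hint.mono_set Set.sdiff_subset)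
          (integrableOn_const (ne_top_of_le_ne_top hμs (measure_mono Set.sdiff_subset)))
          (hs.diff hE) fun x hx ↦ (hbound x hx.1).2) _
      _ = ∫ x in E, F i x ∂μ + M * μ.real (s \ E) := by
        rw [setIntegral_const, smul_eq_mul, mul_comm]
  exact ge_of_tendsto (hE_lim.add_const _) hsplit

theorem circleAverage_mono_of_eventually_le {c : ℂ} {R : ℝ} {f₁ f₂ : ℂ → ℝ}
    (hf₁ : CircleIntegrable f₁ c R) (hf₂ : CircleIntegrable f₂ c R) (hR : R ≠ 0)
    (h : ∀ᶠ z in codiscreteWithin (sphere c |R|), f₁ z ≤ f₂ z) :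
    circleAverage f₁ c R ≤ circleAverage f₂ c R := by
  rw [circleAverage_def, circleAverage_def, smul_eq_mul, smul_eq_mul]
  gcongr
  refine intervalIntegral.integral_mono_ae_restrict two_pi_pos.le hf₁ hf₂ ?_
  apply ae_restrict_le_codiscreteWithin measurableSet_Icc
  exact codiscreteWithin_mono (by tauto) (circleMap_preimage_codiscrete hR h)

open MeromorphicOn in
theorem AnalyticOnNhd.divisor_mul_log_add_log_norm_le_circleAverage {c : ℂ} {R : ℝ} {f : ℂ → ℂ}
    (hR : R ≠ 0) (hf : AnalyticOnNhd ℂ f (closedBall c |R|)) :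
    divisor f (closedBall c |R|) c * Real.log R + Real.log ‖meromorphicTrailingCoeffAt f c‖
      ≤ circleAverage (Real.log ‖f ·‖) c R := by
  rw [hf.meromorphicOn.circleAverage_log_norm hR, add_assoc]
  refine le_add_of_nonneg_left (finsum_nonneg fun u ↦ ?_)
  rcases eq_or_ne u c with rfl | huc
  · simp
  by_cases hu : u ∈ closedBall c |R|
  · refine mul_nonneg (mod_cast hf.divisor_nonneg u) ?_
    have : 0 < ‖c - u‖ := norm_pos_iff.mpr (sub_ne_zero.mpr huc.symm)
    rw [mem_closedBall, dist_eq_norm'] at hu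
    rw [← Real.log_abs, abs_mul, abs_inv, abs_norm, ← div_eq_mul_inv]
    exact Real.log_nonneg ((one_le_div this).mpr hu)
  · simp [hu]

open MeromorphicOn in
theorem AnalyticOnNhd.exists_eventually_le_circleAverage_log_norm {c : ℂ} {R : ℝ} {f : ℂ → ℂ}
    (hR : 0 < R) (hf : AnalyticOnNhd ℂ f (ball c R)) :
    ∃ K, ∀ᶠ r in 𝓝[<] R, K ≤ circleAverage (Real.log ‖f ·‖) c r := by
  set n : ℤ := ((analyticOrderAt f c).map (↑)).untop₀
  refine ⟨n * Real.log (R / 2) + Real.log ‖meromorphicTrailingCoeffAt f c‖, ?_⟩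
  filter_upwards [Ioo_mem_nhdsLT (half_lt_self hR)] with r hr
  have hr0 : 0 < r := (half_pos hR).trans hr.1
  have hfr : AnalyticOnNhd ℂ f (closedBall c |r|) :=
    hf.mono (closedBall_subset_ball ((abs_of_pos hr0).trans_lt hr.2))
  have hdiv : divisor f (closedBall c |r|) c = n := hfr.divisor_apply (by simp)
  have hn : 0 ≤ n := hdiv ▸ hfr.divisor_nonneg c
  refine le_trans ?_ (hdiv ▸ hfr.divisor_mul_log_add_log_norm_le_circleAverage hr0.ne')
  gcongr
  exact hr.1.le

theorem circleAverage_log_norm_le_circleAverage_log_max {c : ℂ} {R ε : ℝ} {f : ℂ → ℂ}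
    (hR : R ≠ 0) (hε : 0 < ε) (hf : AnalyticOnNhd ℂ f (sphere c |R|))
    (hzeros : f ⁻¹' {0}ᶜ ∈ codiscreteWithin (sphere c |R|)) :
    circleAverage (Real.log ‖f ·‖) c R ≤ circleAverage (fun z ↦ Real.log (max ‖f z‖ ε)) c R := by
  refine circleAverage_mono_of_eventually_le hf.meromorphicOn.circleIntegrable_log_norm
    (ContinuousOn.circleIntegrable' ?_) hR ?_
  · exact (hf.continuousOn.norm.sup continuousOn_const).log
      fun z _ ↦ (hε.trans_le (le_max_right _ _)).ne'
  · filter_upwards [hzeros] with z hz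
    exact Real.log_le_log (norm_pos_iff.mpr hz) (le_max_left _ _)

theorem two_pi_mul_le_of_tendsto_radial_zero {f : ℂ → ℂ} {M ε K : ℝ} {E : Set ℝ}
    (hf : ContinuousOn f (ball 0 1)) (hM : ∀ z ∈ ball (0 : ℂ) 1, ‖f z‖ ≤ M) (hε : 0 < ε)
    (hεM : ε ≤ M) (hE : MeasurableSet E) (hEsub : E ⊆ Set.Ico 0 (2 * Real.pi))
    (hlim : ∀ θ ∈ E, Tendsto (fun r : ℝ ↦ f (r * exp (θ * I))) (𝓝[<] 1) (𝓝 0))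
    (hK : ∀ᶠ r in 𝓝[<] 1, K ≤ circleAverage (fun z ↦ Real.log (max ‖f z‖ ε)) 0 r) :
    2 * Real.pi * K ≤ Real.log ε * volume.real E + Real.log M * (2 * Real.pi - volume.real E) := by
  set g : ℂ → ℝ := fun z ↦ Real.log (max ‖f z‖ ε)
  have hg : ContinuousOn g (ball 0 1) := (hf.norm.sup continuousOn_const).log
    fun z _ ↦ (hε.trans_le (le_max_right _ _)).ne'
  have hmem : ∀ r ∈ Set.Ioo (0 : ℝ) 1, ∀ θ, circleMap 0 r θ ∈ ball (0 : ℂ) 1 := fun r hr θ ↦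
    sphere_subset_ball (abs_lt.mpr ⟨by linarith [hr.1], hr.2⟩) (circleMap_mem_sphere' 0 r θ)
  have hr : ∀ᶠ r in 𝓝[<] (1 : ℝ), r ∈ Set.Ioo 0 1 := Ioo_mem_nhdsLT one_pos
  have hvol : volume.real (Set.Ico 0 (2 * Real.pi) \ E) = 2 * Real.pi - volume.real E := by
    rw [measureReal_sdiff hEsub hE measure_Ico_lt_top.ne, Real.volume_real_Ico, sub_zero,
      max_eq_left two_pi_pos.le]
  rw [← hvol]
  refine le_of_eventually_le_setIntegral_of_tendsto (l := 𝓝[<] 1)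
    (F := fun r θ ↦ g (circleMap 0 r θ)) (m := Real.log ε) measurableSet_Ico measure_Ico_lt_top.ne hE hEsub ?_ ?_ ?_ ?_
  · filter_upwards [hr] with r hr
    exact (hg.comp_continuous (continuous_circleMap 0 r) (hmem r hr)).aestronglyMeasurable
  · filter_upwards [hr] with r hr θ _
    have hfε : 0 < max ‖f (circleMap 0 r θ)‖ ε := hε.trans_le (le_max_right _ _)
    exact ⟨Real.log_le_log hε (le_max_right _ _),
      Real.log_le_log hfε (max_le (hM _ (hmem r hr θ)) hεM)⟩
  · intro θ hθ
    have hmax := ((hlim θ hθ).norm.max (tendsto_const_nhds (x := ε))).log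
      (hε.trans_le (le_max_right _ _)).ne'
    simpa [g, circleMap_zero, norm_zero, max_eq_right hε.le] using hmax
  · filter_upwards [hK] with r hKr
    rw [circleAverage_def, smul_eq_mul, le_inv_mul_iff₀ two_pi_pos,
      intervalIntegral.integral_of_le two_pi_pos.le, integral_Ioc_eq_integral_Ioo,
      ← integral_Ico_eq_integral_Ioo] at hKr
    exact hKr

theorem stmt2 (f : ℂ → ℂ) (C : ℝ)
    (hf : DifferentiableOn ℂ f (ball 0 1))
    (hb : ∀ z ∈ ball (0:ℂ) 1, ‖f z‖ ≤ C)
    (E : Set ℝ) (hEmeas : MeasurableSet E) (hEsub : E ⊆ Set.Ico 0 (2 * Real.pi))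
    (hEpos : 0 < volume E)
    (hlim : ∀ θ ∈ E,
      Tendsto (fun r : ℝ => f ((r : ℂ) * Complex.exp (θ * Complex.I)))
        (nhdsWithin 1 (Set.Iio 1)) (nhds 0)) :
    ∀ z ∈ ball (0:ℂ) 1, f z = 0 := by
  by_contra! hne
  obtain ⟨z₀, hz₀, hfz₀⟩ := hne
  have hC : 0 < C := (norm_pos_iff.mpr hfz₀).trans_le (hb z₀ hz₀)
  have hδ : 0 < volume.real E := ENNReal.toReal_pos hEpos.ne'
    (ne_top_of_le_ne_top measure_Ico_lt_top.ne (measure_mono hEsub))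
  have han : AnalyticOnNhd ℂ f (ball 0 1) := hf.analyticOnNhd isOpen_ball
  obtain ⟨K, hK⟩ := han.exists_eventually_le_circleAverage_log_norm one_pos
  have hzeros := han.preimage_zero_mem_codiscreteWithin hfz₀ hz₀ (isConnected_ball one_pos)
  have hbound : ∀ ε ∈ Set.Ioc 0 C, 2 * Real.pi * K
      ≤ Real.log ε * volume.real E + Real.log C * (2 * Real.pi - volume.real E) := by
    intro ε hε
    refine two_pi_mul_le_of_tendsto_radial_zero hf.continuousOn hb hε.1 hε.2 hEmeas hEsub hlim ?_
    filter_upwards [hK, Ioo_mem_nhdsLT one_pos] with r hKr hr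
    have hsphere : sphere (0 : ℂ) |r| ⊆ ball 0 1 :=
      sphere_subset_ball ((abs_of_pos hr.1).trans_lt hr.2)
    exact hKr.trans (circleAverage_log_norm_le_circleAverage_log_max hr.1.ne' hε.1
      (han.mono hsphere) (codiscreteWithin_mono hsphere hzeros))
  have hbot : Tendsto (fun ε ↦ Real.log ε * volume.real E
      + Real.log C * (2 * Real.pi - volume.real E)) (𝓝[>] 0) atBot :=
    tendsto_atBot_add_const_right _ _ (Real.tendsto_log_nhdsGT_zero.atBot_mul_const hδ)
  obtain ⟨ε, hεK, hε⟩ := ((hbot.eventually_lt_atBot _).and (Ioc_mem_nhdsGT hC)).exists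
  exact (hbound ε hε).not_gt hεK
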